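/- arXiv:1804.06249 — 2 statements merged into one kernel-verified Lean document; each statement's English description precedes it below -/
import Mathlib

section
/- Let b : Ω × ℝ → ℝ^N satisfy: (i) b is a locally bounded Borel function; (ii) for L^N-a.e. x ∈ Ω, b(x,·) is continuous on ℝ; (iii) for every t ∈ ℝ, b(·,t) ∈ DM^∞_loc(Ω); (iv) σ := ⋁_{t∈ℝ} |Div_x b(·,t)| is a Radon measure. Extend b by 0 outside Ω and set B(x,t) := ∫_0^t b(x,s) ds. Then for every t ∈ ℝ, B(·,t) ∈ DM^∞_loc(Ω), Div_x B(·,t) is absolutely continuous with respect to σ with Radon–Nikodým derivative F(·,t) satisfying F(x,t) = ∫_0^t f(x,s) ds for σ-a.e. x ∈ Ω, and for every t,s ∈ ℝ one has |F(x,t) − F(x,s)| ≤ |t−s| for σ-a.e. x ∈ Ω. -/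
open MeasureTheory Metric Filter Set Function
open scoped Topology ENNReal InnerProductSpace NNReal

noncomputable section

/-- Euclidean space `ℝ^N`. -/
abbrev Euc (N : ℕ) : Type := EuclideanSpace ℝ (Fin N)

variable {N : ℕ}

/-- A smooth test function compactly supported in the open set `Ω`. -/
def TestFun (Ω : Set (Euc N)) (φ : Euc N → ℝ) : Prop :=
  ContDiff ℝ (⊤ : ℕ∞) φ ∧ HasCompactSupport φ ∧ tsupport φ ⊆ Ω

/-- `z` is the approximate limit of `u` at `x₀`. -/
def ApproxLimitAt (u : Euc N → ℝ) (x₀ : Euc N) (z : ℝ) : Prop :=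
  Tendsto (fun r : ℝ =>
      (volume (ball x₀ r)).toReal⁻¹ * ∫ x in ball x₀ r, |u x - z|)
    (𝓝[>] (0:ℝ)) (𝓝 0)

/-- `z` is the approximate limit of the vector field `A` at `x₀`. -/
def VApproxLimitAt (A : Euc N → Euc N) (x₀ : Euc N) (z : Euc N) : Prop :=
  Tendsto (fun r : ℝ =>
      (volume (ball x₀ r)).toReal⁻¹ * ∫ x in ball x₀ r, ‖A x - z‖)
    (𝓝[>] (0:ℝ)) (𝓝 0)

/-- `x₀` is an approximate jump point of `u`, with approximate limit `a` on the
positive side of the unit normal `ν` and `b` on the negative side. -/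
def ApproxJumpAt (u : Euc N → ℝ) (x₀ : Euc N) (a b : ℝ) (ν : Euc N) : Prop :=
  ‖ν‖ = 1 ∧ a ≠ b ∧
  Tendsto (fun r : ℝ => (volume (ball x₀ r)).toReal⁻¹ *
      ∫ x in {y | y ∈ ball x₀ r ∧ 0 < ⟪y - x₀, ν⟫_ℝ}, |u x - a|) (𝓝[>] (0:ℝ)) (𝓝 0) ∧
  Tendsto (fun r : ℝ => (volume (ball x₀ r)).toReal⁻¹ *
      ∫ x in {y | y ∈ ball x₀ r ∧ ⟪y - x₀, ν⟫_ℝ < 0}, |u x - b|) (𝓝[>] (0:ℝ)) (𝓝 0)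

/-- A symmetric smooth convolution kernel supported in the unit ball. -/
structure IsMollifier (ρ : Euc N → ℝ) : Prop where
  smooth : ContDiff ℝ (⊤ : ℕ∞) ρ
  nonneg : ∀ x, 0 ≤ ρ x
  symmetric : ∀ x, ρ (-x) = ρ x
  supp : tsupport ρ ⊆ closedBall 0 1
  integral_one : ∫ x, ρ x = 1

/-- The rescaled kernel `ρ_ε(x) = ε^{-N} ρ(x/ε)`. -/
def mollK (ρ : Euc N → ℝ) (ε : ℝ) (x : Euc N) : ℝ := (ε ^ N)⁻¹ * ρ (ε⁻¹ • x)

/-- Mollification `ρ_ε * u` of a scalar function. -/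
def mollify (ρ : Euc N → ℝ) (ε : ℝ) (u : Euc N → ℝ) (x : Euc N) : ℝ :=
  ∫ y, mollK ρ ε (x - y) * u y

/-- Mollification `ρ_ε * A` of a vector field. -/
def mollifyV (ρ : Euc N → ℝ) (ε : ℝ) (A : Euc N → Euc N) (x : Euc N) : Euc N :=
  ∫ y, mollK ρ ε (x - y) • A y

/-- The distributional divergence of `A` on the open set `Ω` is the Radon
measure `μp - μn` (so in particular `A ∈ 𝒟ℳ^∞_loc(Ω)`). -/
def HasDivMeasureOn (Ω : Set (Euc N)) (A : Euc N → Euc N)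
    (μp μn : Measure (Euc N)) : Prop :=
  (∀ K : Set (Euc N), K ⊆ Ω → IsCompact K → μp K + μn K < ⊤) ∧
  ∀ φ : Euc N → ℝ, TestFun Ω φ →
    (∫ x in Ω, ⟪A x, gradient φ x⟫_ℝ) = -((∫ x, φ x ∂μp) - (∫ x, φ x ∂μn))

/-- Assumptions (i)–(iv) on the vector field `b(x,t)` (except for boundedness,
which is stated separately): Borel measurability; continuity in `t` for a.e.
`x`; for every `t ∈ ℝ`, `b(·,t) ∈ 𝒟ℳ^∞_loc(Ω)` with
`Div_x b(·,t) = f(·,t) σ`, where `σ` is a Radon measure on `Ω` (the least upper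
bound `⋁_t |Div_x b(·,t)|`) and `f(·,t)` is the Radon–Nikodým derivative, with
`|f(·,t)| ≤ 1` `σ`-a.e. -/
structure DivAssumptions (Ω : Set (Euc N)) (b : Euc N → ℝ → Euc N)
    (σ : Measure (Euc N)) (f : Euc N → ℝ → ℝ) : Prop where
  isOpen_dom : IsOpen Ω
  meas_b : Measurable (uncurry b)
  cont_b : ∀ᵐ x, x ∈ Ω → Continuous fun t => b x t
  meas_f : Measurable (uncurry f)
  bound_f : ∀ t : ℝ, ∀ᵐ x ∂σ, |f x t| ≤ 1
  locFin_σ : ∀ K : Set (Euc N), K ⊆ Ω → IsCompact K → σ K < ⊤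
  supp_σ : σ Ωᶜ = 0
  div_eq : ∀ t : ℝ, ∀ φ : Euc N → ℝ, TestFun Ω φ →
    (∫ x in Ω, ⟪b x t, gradient φ x⟫_ℝ) = -∫ x, φ x * f x t ∂σ

/-- `B(x,t) := ∫_0^t b(x,s) ds`. -/
def Bfield (b : Euc N → ℝ → Euc N) (x : Euc N) (t : ℝ) : Euc N :=
  ∫ s in (0:ℝ)..t, b x s

/-- `F(x,t) := ∫_0^t f(x,s) ds`. -/
def Ffun (f : Euc N → ℝ → ℝ) (x : Euc N) (t : ℝ) : ℝ :=
  ∫ s in (0:ℝ)..t, f x s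

/-- The positive part `(F(·,t))⁺ σ` of the measure `Div_x B(·,t) = F(·,t) σ`. -/
def divBpos (σ : Measure (Euc N)) (f : Euc N → ℝ → ℝ) (t : ℝ) : Measure (Euc N) :=
  σ.withDensity fun x => ENNReal.ofReal (Ffun f x t)

/-- The negative part `(F(·,t))⁻ σ` of the measure `Div_x B(·,t) = F(·,t) σ`. -/
def divBneg (σ : Measure (Euc N)) (f : Euc N → ℝ → ℝ) (t : ℝ) : Measure (Euc N) :=
  σ.withDensity fun x => ENNReal.ofReal (-(Ffun f x t))

/-- `u` is a function of locally bounded variation on `Ω`: the distributional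
gradient is the vector-valued Radon measure `Du = θu |Du|`, where `|Du| = Dνu`
is its total variation and `θu` the polar vector. -/
structure IsBVOn (Ω : Set (Euc N)) (u : Euc N → ℝ)
    (Dνu : Measure (Euc N)) (θu : Euc N → Euc N) : Prop where
  locInt : LocallyIntegrableOn u Ω
  meas_θ : Measurable θu
  unit_θ : ∀ᵐ x ∂Dνu, ‖θu x‖ = 1
  locFin : ∀ K : Set (Euc N), K ⊆ Ω → IsCompact K → Dνu K < ⊤
  suppDu : Dνu Ωᶜ = 0
  ibp : ∀ φ : Euc N → ℝ, TestFun Ω φ →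
    (∫ x in Ω, u x • gradient φ x) = -∫ x, φ x • θu x ∂Dνu

/-- `u ∈ L^∞_loc(Ω)`. -/
def LocBddOn (Ω : Set (Euc N)) (u : Euc N → ℝ) : Prop :=
  ∀ K : Set (Euc N), K ⊆ Ω → IsCompact K →
    ∃ C : ℝ, ∀ᵐ x ∂(volume.restrict K), |u x| ≤ C

/-- `up`/`um` are (precise representatives of) the one–sided approximate limits
`u⁺ ≥ u⁻` of `u`, with the convention `u⁺ = u⁻ = ũ` at points of approximate
continuity; this is required `μ`-a.e. -/
def PreciseReps (Ω : Set (Euc N)) (u up um : Euc N → ℝ)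
    (μ : Measure (Euc N)) : Prop :=
  ∀ᵐ x ∂μ, x ∈ Ω →
    ((ApproxLimitAt u x (up x) ∧ um x = up x) ∨
      ∃ ν : Euc N, ApproxJumpAt u x (up x) (um x) ν)

/-- `τ` is the Anzellotti normal trace (w.r.t. the outer normal) on `∂O` of the
field `A` whose distributional divergence is the measure `μp - μn`:
`∫_O ⟨A, ∇φ⟩ dx + ∫_O φ d(Div A) = ∫_{∂O} φ τ dH^{N-1}` for all test `φ`. -/
def IsAnzTrace (A : Euc N → Euc N) (μp μn : Measure (Euc N))
    (O : Set (Euc N)) (τ : Euc N → ℝ) : Prop :=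
  ∀ φ : Euc N → ℝ, ContDiff ℝ (⊤ : ℕ∞) φ → HasCompactSupport φ →
    (∫ x in O, ⟪A x, gradient φ x⟫_ℝ) +
      ((∫ x in O, φ x ∂μp) - (∫ x in O, φ x ∂μn))
      = ∫ x in frontier O, φ x * τ x ∂(μH[(N:ℝ) - 1])

/-- An oriented countably `H^{N-1}`-rectifiable set `S`, presented (following
Ambrosio–Crippa–Maniglia) through pairwise disjoint Borel pieces `Nset i ⊆ S`
covering `H^{N-1}`-almost all of `S`, each contained in the boundaries of a
bounded open set `O i` (the side of the inner normal trace) and of a bounded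
open set `O' i` (the side of the outer normal trace). -/
structure OrientedCover (N : ℕ) (S : Set (Euc N)) where
  O : ℕ → Set (Euc N)
  O' : ℕ → Set (Euc N)
  Nset : ℕ → Set (Euc N)
  open_O : ∀ i, IsOpen (O i)
  open_O' : ∀ i, IsOpen (O' i)
  bdd_O : ∀ i, Bornology.IsBounded (O i)
  bdd_O' : ∀ i, Bornology.IsBounded (O' i)
  meas_N : ∀ i, MeasurableSet (Nset i)
  disj_N : Pairwise (fun i j => Disjoint (Nset i) (Nset j))
  N_sub : ∀ i, Nset i ⊆ frontier (O i) ∩ frontier (O' i)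
  N_sub_S : ∀ i, Nset i ⊆ S
  cover : μH[(N:ℝ) - 1] (S \ ⋃ i, Nset i) = 0
  finH_O : ∀ i, μH[(N:ℝ) - 1] (frontier (O i)) < ⊤
  finH_O' : ∀ i, μH[(N:ℝ) - 1] (frontier (O' i)) < ⊤

/-- `(βm, βp)` are the weak normal traces `Tr^∓` of `A` on the oriented
countably rectifiable set presented by `cov`; `μp - μn` is the divergence
measure of `A`. -/
def HasNormalTraces {S : Set (Euc N)} (cov : OrientedCover N S)
    (A : Euc N → Euc N) (μp μn : Measure (Euc N)) (βm βp : Euc N → ℝ) : Prop :=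
  (∀ i, ∃ τ, IsAnzTrace A μp μn (cov.O i) τ ∧ EqOn βm τ (cov.Nset i)) ∧
  (∀ i, ∃ τ, IsAnzTrace A μp μn (cov.O' i) τ ∧ EqOn βp (fun x => -τ x) (cov.Nset i))

/-- The measure-theoretic interior `E^1` of `E` (points of density one). -/
def MeasInt (E : Set (Euc N)) : Set (Euc N) :=
  {x | Tendsto (fun r : ℝ => volume (E ∩ ball x r) / volume (ball x r))
    (𝓝[>] (0:ℝ)) (𝓝 1)}

/-- The measure-theoretic exterior `E^0` of `E` (points of density zero). -/
def MeasExt (E : Set (Euc N)) : Set (Euc N) :=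
  {x | Tendsto (fun r : ℝ => volume (E ∩ ball x r) / volume (ball x r))
    (𝓝[>] (0:ℝ)) (𝓝 0)}

/-- The essential boundary `∂^e E = ℝ^N \ (E^0 ∪ E^1)` of `E` (which coincides
`H^{N-1}`-a.e. with the reduced boundary `∂^* E` for sets of finite
perimeter). -/
def essBdry (E : Set (Euc N)) : Set (Euc N) := univ \ (MeasInt E ∪ MeasExt E)

end

noncomputable section
open MeasureTheory Metric Filter Set Function
open scoped Topology ENNReal InnerProductSpace NNReal

/-! Integrating the identities `∫_Ω ⟪b(·,s), ∇φ⟫ = -∫ φ f(·,s) dσ` over `s ∈ (0,t)` and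
exchanging the order of integration on both sides gives `Div_x B(·,t) = F(·,t) σ`; Fubini
applies because `b` is bounded on `supp φ × [0,t]`, `σ` is finite on `supp φ` and `|f| ≤ 1`.
Since `Ω` is σ-compact, `σ` is σ-finite, so for `σ`-a.e. `x` the bound `|f(x,s)| ≤ 1` holds for
a.e. `s ∈ ℝ`, which makes `F(x,·)` `1`-Lipschitz. -/

theorem IsOpen.isSigmaCompact {X : Type*} [TopologicalSpace X] [LocallyCompactSpace X]
    [SecondCountableTopology X] {U : Set X} (hU : IsOpen U) : IsSigmaCompact U :=
  have := hU.locallyCompactSpace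
  isSigmaCompact_iff_sigmaCompactSpace.2 inferInstance

theorem sigmaFinite_of_isSigmaCompact {X : Type*} [TopologicalSpace X] [MeasurableSpace X]
    {μ : Measure X} {U : Set X} (hU : IsSigmaCompact U)
    (hfin : ∀ K ⊆ U, IsCompact K → μ K < ⊤) (hcompl : μ Uᶜ = 0) : SigmaFinite μ := by
  obtain ⟨K, hK, rfl⟩ := hU
  refine Measure.sigmaFinite_of_countable (S := insert (⋃ n, K n)ᶜ (range K))
    ((countable_range K).insert _) ?_ ?_
  · rintro s (rfl | ⟨n, rfl⟩)
    · exact hcompl ▸ ENNReal.zero_lt_top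
    · exact hfin _ (subset_iUnion K n) (hK n)
  · rw [sUnion_insert, sUnion_range, compl_union_self]

section Gradient

variable {F : Type*} [NormedAddCommGroup F] [InnerProductSpace ℝ F] [CompleteSpace F]
  {φ : F → ℝ}

theorem support_gradient_subset : support (gradient φ) ⊆ tsupport φ := fun x hx =>
  support_fderiv_subset ℝ (by simpa [gradient] using hx)

theorem HasCompactSupport.gradient (hφ : HasCompactSupport φ) : HasCompactSupport (gradient φ) :=
  hφ.mono' support_gradient_subset

theorem ContDiff.continuous_gradient (hφ : ContDiff ℝ 1 φ) : Continuous (gradient φ) :=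
  (InnerProductSpace.toDual ℝ F).symm.continuous.comp (hφ.continuous_fderiv one_ne_zero)

end Gradient

section Fubini

variable {X T : Type*} [MeasurableSpace X] [MeasurableSpace T] {ν : Measure T} [IsFiniteMeasure ν]

theorem integral_integral_swap_of_norm_le {E : Type*} [NormedAddCommGroup E] [NormedSpace ℝ E]
    {μ : Measure X} [SFinite μ] {F : X → T → E}
    (hF : AEStronglyMeasurable (uncurry F) (μ.prod ν)) {G : X → ℝ} (hG : Integrable G μ)
    (hFG : ∀ᵐ p ∂μ.prod ν, ‖F p.1 p.2‖ ≤ G p.1) :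
    ∫ x, ∫ s, F x s ∂ν ∂μ = ∫ s, ∫ x, F x s ∂μ ∂ν :=
  integral_integral_swap ((hG.comp_fst ν).mono' hF hFG)

theorem integral_inner_integral_swap {E : Type*} [NormedAddCommGroup E] [InnerProductSpace ℝ E]
    [CompleteSpace E] {μ : Measure X} [SFinite μ] {K : Set X} {C : ℝ}
    {b : X → T → E} (hb : StronglyMeasurable (uncurry b))
    (hbC : ∀ᵐ s ∂ν, ∀ x ∈ K, ‖b x s‖ ≤ C) {g : X → E} (hg : Integrable g μ)
    (hgK : ∀ x ∉ K, g x = 0) :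
    ∫ x, ⟪∫ s, b x s ∂ν, g x⟫_ℝ ∂μ = ∫ s, ∫ x, ⟪b x s, g x⟫_ℝ ∂μ ∂ν := by
  have inner_integral : ∀ x, ⟪∫ s, b x s ∂ν, g x⟫_ℝ = ∫ s, ⟪b x s, g x⟫_ℝ ∂ν := by
    intro x
    by_cases hx : x ∈ K
    · have hbx : Integrable (b x) ν :=
        (integrable_const C).mono' (hb.comp_measurable measurable_prodMk_left).aestronglyMeasurable
          (hbC.mono fun s hs => hs x hx)
      simp_rw [real_inner_comm (g x)]
      exact (integral_inner hbx (g x)).symm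
    · simp [hgK x hx]
  have hbound : ∀ᵐ p ∂μ.prod ν, ‖⟪b p.1 p.2, g p.1⟫_ℝ‖ ≤ C * ‖g p.1‖ := by
    filter_upwards [Measure.quasiMeasurePreserving_snd.tendsto_ae.eventually hbC] with p hp
    by_cases hx : p.1 ∈ K
    · exact (norm_inner_le_norm _ _).trans
        (mul_le_mul_of_nonneg_right (hp p.1 hx) (norm_nonneg _))
    · simp [hgK p.1 hx]
  simp_rw [inner_integral]
  exact integral_integral_swap_of_norm_le
    (hb.aestronglyMeasurable.inner hg.aestronglyMeasurable.comp_fst) (hg.norm.const_mul C) hbound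

theorem integral_mul_integral_swap {σ : Measure X} {K : Set X} (hσK : σ K ≠ ⊤)
    {φ : X → ℝ} {C : ℝ} (hφ : StronglyMeasurable φ) (hφC : ∀ x, ‖φ x‖ ≤ C)
    (hφK : ∀ x ∉ K, φ x = 0) {f : X → T → ℝ} {M : ℝ} (hf : StronglyMeasurable (uncurry f))
    (hfM : ∀ s, ∀ᵐ x ∂σ, |f x s| ≤ M) :
    ∫ x, φ x * ∫ s, f x s ∂ν ∂σ = ∫ s, ∫ x, φ x * f x s ∂σ ∂ν := by
  have : IsFiniteMeasure (σ.restrict K) := isFiniteMeasure_restrict.2 hσK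
  have restrict_K : ∀ h : X → ℝ, ∫ x in K, φ x * h x ∂σ = ∫ x, φ x * h x ∂σ := fun h =>
    setIntegral_eq_integral_of_forall_compl_eq_zero fun x hx => by rw [hφK x hx, zero_mul]
  have hbound : ∀ᵐ p ∂ν.prod (σ.restrict K), ‖φ p.2 * f p.2 p.1‖ ≤ C * M := by
    have hfM' : ∀ᵐ p ∂ν.prod (σ.restrict K), |f p.2 p.1| ≤ M :=
      (Measure.ae_prod_iff_ae_ae (measurableSet_le
        (hf.measurable.comp measurable_swap).abs measurable_const)).2
        (ae_of_all _ fun s => ae_restrict_of_ae (hfM s))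
    filter_upwards [hfM'] with p hp
    rw [norm_mul, Real.norm_eq_abs (f _ _)]
    exact mul_le_mul (hφC _) hp (abs_nonneg _) ((norm_nonneg _).trans (hφC p.2))
  calc ∫ x, φ x * ∫ s, f x s ∂ν ∂σ = ∫ x in K, ∫ s, φ x * f x s ∂ν ∂σ := by
        simp_rw [integral_const_mul, restrict_K]
    _ = ∫ s, ∫ x in K, φ x * f x s ∂σ ∂ν :=
        (integral_integral_swap_of_norm_le
          ((hφ.comp_measurable measurable_snd).mul
            (hf.comp_measurable measurable_swap)).aestronglyMeasurable
          (integrable_const (C * M)) hbound).symm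
    _ = ∫ s, ∫ x, φ x * f x s ∂σ ∂ν := by simp_rw [restrict_K]

end Fubini

/-- `Div A = F σ` in `𝒟'(Ω)`. -/
def HasDivDensityOn {N : ℕ} (Ω : Set (Euc N)) (A : Euc N → Euc N) (σ : Measure (Euc N))
    (F : Euc N → ℝ) : Prop :=
  ∀ φ : Euc N → ℝ, TestFun Ω φ → (∫ x in Ω, ⟪A x, gradient φ x⟫_ℝ) = -∫ x, φ x * F x ∂σ

namespace HasDivDensityOn

variable {N : ℕ} {Ω : Set (Euc N)} {σ : Measure (Euc N)}

theorem const_smul {A : Euc N → Euc N} {F : Euc N → ℝ} (h : HasDivDensityOn Ω A σ F) (c : ℝ) :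
    HasDivDensityOn Ω (fun x => c • A x) σ (fun x => c * F x) := fun φ hφ => by
  simp_rw [real_inner_smul_left, integral_const_mul, mul_left_comm _ c, integral_const_mul,
    h φ hφ, mul_neg]

theorem integral {T : Type*} [MeasurableSpace T] {ν : Measure T} [IsFiniteMeasure ν]
    {b : Euc N → T → Euc N} {f : Euc N → T → ℝ} {M : ℝ}
    (hdiv : ∀ s, HasDivDensityOn Ω (b · s) σ (f · s)) (hb : StronglyMeasurable (uncurry b))
    (hbK : ∀ K ⊆ Ω, IsCompact K → ∃ C, ∀ᵐ s ∂ν, ∀ x ∈ K, ‖b x s‖ ≤ C)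
    (hf : StronglyMeasurable (uncurry f)) (hfM : ∀ s, ∀ᵐ x ∂σ, |f x s| ≤ M)
    (hσ : ∀ K ⊆ Ω, IsCompact K → σ K < ⊤) :
    HasDivDensityOn Ω (fun x => ∫ s, b x s ∂ν) σ (fun x => ∫ s, f x s ∂ν) := by
  intro φ hφ
  obtain ⟨hφ_smooth, hφ_compact, hφΩ⟩ := hφ
  obtain ⟨C, hC⟩ := hbK _ hφΩ hφ_compact
  obtain ⟨Cφ, hCφ⟩ := hφ_smooth.continuous.bounded_above_of_compact_support hφ_compact
  have hgrad : Integrable (gradient φ) (volume.restrict Ω) :=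
    ((hφ_smooth.of_le (by simp)).continuous_gradient.integrable_of_hasCompactSupport
      hφ_compact.gradient).restrict
  calc ∫ x in Ω, ⟪∫ s, b x s ∂ν, gradient φ x⟫_ℝ
      = ∫ s, (∫ x in Ω, ⟪b x s, gradient φ x⟫_ℝ) ∂ν :=
        integral_inner_integral_swap hb hC hgrad fun x hx =>
          notMem_support.1 fun h => hx (support_gradient_subset h)
    _ = ∫ s, -∫ x, φ x * f x s ∂σ ∂ν :=
        integral_congr_ae (ae_of_all _ fun s => hdiv s φ ⟨hφ_smooth, hφ_compact, hφΩ⟩)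
    _ = -∫ x, φ x * ∫ s, f x s ∂ν ∂σ := by
        rw [integral_neg, integral_mul_integral_swap (hσ _ hφΩ hφ_compact).ne
          hφ_smooth.continuous.stronglyMeasurable hCφ
          (fun x hx => image_eq_zero_of_notMem_tsupport hx) hf hfM]

theorem intervalIntegral {b : Euc N → ℝ → Euc N} {f : Euc N → ℝ → ℝ} {M : ℝ}
    (hdiv : ∀ s, HasDivDensityOn Ω (b · s) σ (f · s)) (hb : StronglyMeasurable (uncurry b))
    (hlb : ∀ K : Set (Euc N × ℝ), IsCompact K → ∃ C, ∀ p ∈ K, ‖b p.1 p.2‖ ≤ C)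
    (hf : StronglyMeasurable (uncurry f)) (hfM : ∀ s, ∀ᵐ x ∂σ, |f x s| ≤ M)
    (hσ : ∀ K ⊆ Ω, IsCompact K → σ K < ⊤) (a t : ℝ) :
    HasDivDensityOn Ω (fun x => ∫ s in a..t, b x s) σ (fun x => ∫ s in a..t, f x s) := by
  have hbK (K : Set (Euc N)) (_ : K ⊆ Ω) (hK : IsCompact K) :
      ∃ C, ∀ᵐ s ∂volume.restrict (uIoc a t), ∀ x ∈ K, ‖b x s‖ ≤ C := by
    obtain ⟨C, hC⟩ := hlb _ (hK.prod isCompact_uIcc)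
    exact ⟨C, ae_restrict_of_forall_mem measurableSet_uIoc fun s hs x hx =>
      hC (x, s) ⟨hx, uIoc_subset_uIcc hs⟩⟩
  have : IsFiniteMeasure (volume.restrict (uIoc a t)) := by rw [uIoc]; infer_instance
  simpa only [intervalIntegral.intervalIntegral_eq_integral_uIoc, smul_eq_mul] using
    ((integral hdiv hb hbK hf hfM hσ).const_smul (if a ≤ t then 1 else -1))

end HasDivDensityOn

theorem norm_intervalIntegral_sub_le {E : Type*} [NormedAddCommGroup E] [NormedSpace ℝ E]
    {g : ℝ → E} {C : ℝ} (hg : AEStronglyMeasurable g) (hgC : ∀ᵐ r, ‖g r‖ ≤ C) (a t s : ℝ) :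
    ‖(∫ r in a..t, g r) - ∫ r in a..s, g r‖ ≤ C * |t - s| := by
  have hint (u : ℝ) : IntervalIntegrable g volume a u :=
    (intervalIntegrable_const (c := C)).mono_fun' hg.restrict (ae_restrict_of_ae hgC)
  rw [intervalIntegral.integral_interval_sub_left (hint t) (hint s)]
  exact intervalIntegral.norm_integral_le_of_norm_le_const_ae (hgC.mono fun r h _ => h)

theorem divergence_of_Bfield_general {N : ℕ}
    (Ω : Set (Euc N)) (b : Euc N → ℝ → Euc N)
    (σ : Measure (Euc N)) (f : Euc N → ℝ → ℝ)
    (H : DivAssumptions Ω b σ f)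
    (hlb : ∀ K : Set (Euc N × ℝ), IsCompact K → ∃ C, ∀ p ∈ K, ‖b p.1 p.2‖ ≤ C) :
    (∀ t : ℝ, ∀ φ : Euc N → ℝ, TestFun Ω φ →
        (∫ x in Ω, ⟪Bfield b x t, gradient φ x⟫_ℝ) = -∫ x, φ x * Ffun f x t ∂σ) ∧
      ∀ t s : ℝ, ∀ᵐ x ∂σ, |Ffun f x t - Ffun f x s| ≤ |t - s| := by
  refine ⟨fun t => HasDivDensityOn.intervalIntegral H.div_eq H.meas_b.stronglyMeasurable hlb
    H.meas_f.stronglyMeasurable H.bound_f H.locFin_σ 0 t, fun t s => ?_⟩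
  have := sigmaFinite_of_isSigmaCompact H.isOpen_dom.isSigmaCompact H.locFin_σ H.supp_σ
  have hf_bound : ∀ᵐ x ∂σ, ∀ᵐ r, ‖f x r‖ ≤ 1 :=
    (Measure.ae_ae_comm (p := fun x r => ‖f x r‖ ≤ 1)
      (measurableSet_le H.meas_f.norm measurable_const)).2 (ae_of_all _ H.bound_f)
  filter_upwards [hf_bound] with x hx
  simpa only [Ffun, one_mul, Real.norm_eq_abs] using
    norm_intervalIntegral_sub_le H.meas_f.of_uncurry_left.aestronglyMeasurable hx 0 t s

/-- Lemma `l:B`: under assumptions (i)–(iv) on `b` (with `b`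
locally bounded and extended by `0` outside `Ω`), for every `t` the field
`B(·,t) = ∫_0^t b(·,s) ds` belongs to `𝒟ℳ^∞_loc(Ω)`, with
`Div_x B(·,t) = F(·,t) σ` where `F(x,t) = ∫_0^t f(x,s) ds`, and
`|F(x,t) - F(x,s)| ≤ |t-s|` for `σ`-a.e. `x`. -/
theorem divergence_of_Bfield {N : ℕ}
    (Ω : Set (Euc N)) (b : Euc N → ℝ → Euc N)
    (σ : Measure (Euc N)) (f : Euc N → ℝ → ℝ)
    (H : DivAssumptions Ω b σ f)
    (hlb : ∀ K : Set (Euc N × ℝ), IsCompact K → ∃ C, ∀ p ∈ K, ‖b p.1 p.2‖ ≤ C)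
    (hb0 : ∀ x ∉ Ω, ∀ t : ℝ, b x t = 0) :
    (∀ t : ℝ, ∀ φ : Euc N → ℝ, TestFun Ω φ →
        (∫ x in Ω, ⟪Bfield b x t, gradient φ x⟫_ℝ) = -∫ x, φ x * Ffun f x t ∂σ) ∧
      ∀ t s : ℝ, ∀ᵐ x ∂σ, |Ffun f x t - Ffun f x s| ≤ |t - s| :=
  divergence_of_Bfield_general Ω b σ f H hlb
end
end

section
/- (Intermediate claim in the proof of the Sobolev chain rule) Under assumptions (i)–(iv) on b, with B(x,t) = ∫_0^t b(x,s) ds on ℝ^N, F(x,t) = ∫_0^t f(x,s) ds the σ-density of Div_x B(·,t), and B_ε(·,t) := ρ_ε * B(·,t), let u ∈ W^{1,1}_loc(ℝ^N) ∩ L^∞_loc(ℝ^N) and φ ∈ C_c^∞(ℝ^N). Then ∫_{ℝ^N} φ(x) Div_x B_ε(x,u(x)) dx → ∫_{ℝ^N} φ(x) F(x, ũ(x)) dσ(x) as ε → 0⁺, where ũ is the precise representative of u. -/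
open MeasureTheory Metric Filter Set Function
open scoped Topology ENNReal InnerProductSpace NNReal

noncomputable section
open MeasureTheory Metric Filter Set Function
open scoped Topology ENNReal InnerProductSpace NNReal

/-!
Writing `G y x = φ x * F(y, u x)`, Fubini turns the left-hand side into
`∫ (ρ_ε * G y)(y) dσ(y)`. Since `|f| ≤ 1`, each `F(y, ·)` is `1`-Lipschitz, so wherever `u` has
the approximate limit `ũ(y)`, the function `G y` has the approximate limit `φ y * F(y, ũ(y))`;
and mollifications converge at points of approximate continuity, because `ρ_ε ≤ C ε^{-N}` is
supported in `B(y, ε) ⊆ B(y, 2ε)`. The integrands are bounded by `sup |φ| · sup_{supp φ} |u|`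
and vanish off the `1`-neighbourhood of `supp φ`, which has finite `σ`-measure, so dominated
convergence concludes.
-/

namespace IsMollifier

variable {N : ℕ} {ρ : Euc N → ℝ} (hρ : IsMollifier ρ) {ε : ℝ}
include hρ

theorem mollK_eq_zero (hε : 0 < ε) {x : Euc N} (hx : ε < ‖x‖) : mollK ρ ε x = 0 := by
  have hx' : ε⁻¹ • x ∉ tsupport ρ := fun h => by
    have := hρ.supp h
    rw [mem_closedBall, dist_zero_right, norm_smul, norm_inv, Real.norm_eq_abs,
      abs_of_pos hε, inv_mul_le_iff₀ hε, mul_one] at this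
    exact this.not_gt hx
  simp [mollK, image_eq_zero_of_notMem_tsupport hx']

theorem mollK_sub_eq_zero (hε : 0 < ε) {x y : Euc N} (hxy : ε < dist x y) :
    mollK ρ ε (y - x) = 0 :=
  hρ.mollK_eq_zero hε (by rwa [← dist_eq_norm, dist_comm])

theorem mollK_nonneg (hε : 0 < ε) (x : Euc N) : 0 ≤ mollK ρ ε x :=
  mul_nonneg (inv_nonneg.2 (pow_nonneg hε.le _)) (hρ.nonneg _)

theorem mollK_neg (x : Euc N) : mollK ρ ε (-x) = mollK ρ ε x := by
  rw [mollK, mollK, smul_neg, hρ.symmetric]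

theorem exists_mollK_le : ∃ C, ∀ ε > 0, ∀ x, mollK ρ ε x ≤ (ε ^ N)⁻¹ * C := by
  have hcs : HasCompactSupport ρ :=
    .of_support_subset_isCompact (isCompact_closedBall 0 1) ((subset_tsupport ρ).trans hρ.supp)
  obtain ⟨C, hC⟩ := hρ.smooth.continuous.bounded_above_of_compact_support hcs
  exact ⟨C, fun ε hε x => mul_le_mul_of_nonneg_left ((le_abs_self _).trans (hC _))
    (inv_nonneg.2 (pow_nonneg hε.le _))⟩

theorem continuous_mollK (ε : ℝ) : Continuous (mollK ρ ε) :=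
  continuous_const.mul (hρ.smooth.continuous.comp (continuous_const_smul _))

theorem hasCompactSupport_mollK_sub (hε : 0 < ε) (y : Euc N) :
    HasCompactSupport fun x => mollK ρ ε (y - x) :=
  HasCompactSupport.intro (isCompact_closedBall y ε) fun _ hx =>
    hρ.mollK_sub_eq_zero hε (not_le.1 hx)

theorem integrable_mollK (hε : 0 < ε) : Integrable (mollK ρ ε) :=
  (hρ.continuous_mollK ε).integrable_of_hasCompactSupport <|
    HasCompactSupport.intro (isCompact_closedBall 0 ε) fun _ hx =>
      hρ.mollK_eq_zero hε (by simpa using hx)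

theorem integrable_mollK_sub_mul (hε : 0 < ε) {g : Euc N → ℝ} (hg : LocallyIntegrable g)
    (y : Euc N) : Integrable fun x => mollK ρ ε (y - x) * g x :=
  hg.integrable_smul_left_of_hasCompactSupport
    ((hρ.continuous_mollK ε).comp (continuous_const.sub continuous_id))
    (hρ.hasCompactSupport_mollK_sub hε y)

theorem integral_mollK (hε : 0 < ε) : ∫ x, mollK ρ ε x = 1 := by
  have hεN : 0 < ε⁻¹ ^ N := pow_pos (inv_pos.2 hε) N
  simp only [mollK]
  rw [integral_const_mul, Measure.integral_comp_smul, finrank_euclideanSpace_fin,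
    hρ.integral_one, smul_eq_mul, mul_one, abs_of_pos (inv_pos.2 hεN), ← inv_pow,
    mul_inv_cancel₀ hεN.ne']

theorem integral_mollK_sub (hε : 0 < ε) (y : Euc N) : ∫ x, mollK ρ ε (y - x) = 1 := by
  rw [integral_sub_left_eq_self (mollK ρ ε) volume y, hρ.integral_mollK hε]

theorem mollify_eq (ε : ℝ) (g : Euc N → ℝ) (y : Euc N) :
    mollify ρ ε g y = ∫ x, mollK ρ ε (x - y) * g x := by
  simp_rw [mollify, ← hρ.mollK_neg (_ - y), neg_sub]

theorem abs_mollify_le (hε : 0 < ε) {g : Euc N → ℝ} {C : ℝ} (hg : ∀ᵐ x, |g x| ≤ C)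
    (y : Euc N) : |mollify ρ ε g y| ≤ C := by
  have hbound : ∀ᵐ x, ‖mollK ρ ε (y - x) * g x‖ ≤ mollK ρ ε (y - x) * C := by
    filter_upwards [hg] with x hx
    rw [norm_mul, Real.norm_of_nonneg (hρ.mollK_nonneg hε _)]
    exact mul_le_mul_of_nonneg_left hx (hρ.mollK_nonneg hε _)
  calc |mollify ρ ε g y| ≤ ∫ x, mollK ρ ε (y - x) * C :=
        norm_integral_le_of_norm_le
          (((hρ.integrable_mollK hε).comp_sub_left y).mul_const C) hbound
    _ = C := by rw [integral_mul_const, hρ.integral_mollK_sub hε, one_mul]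

theorem mollify_eq_zero (hε : 0 < ε) {g : Euc N → ℝ} {K : Set (Euc N)}
    (hg : ∀ x ∉ K, g x = 0) {y : Euc N} (hy : y ∉ cthickening ε K) :
    mollify ρ ε g y = 0 := by
  refine integral_eq_zero_of_ae (ae_of_all _ fun x => ?_)
  by_cases hx : x ∈ K
  · have hxy : ε < dist x y := not_le.1 fun h =>
      hy (mem_cthickening_of_dist_le y x ε K hx (by rwa [dist_comm]))
    simp [hρ.mollK_sub_eq_zero hε hxy]
  · simp [hg x hx]

theorem abs_mollify_sub_le (hε : 0 < ε) {C : ℝ} (hC : ∀ x, mollK ρ ε x ≤ (ε ^ N)⁻¹ * C)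
    {g : Euc N → ℝ} (hg : LocallyIntegrable g) (y : Euc N) (z : ℝ) :
    |mollify ρ ε g y - z| ≤ (ε ^ N)⁻¹ * C * ∫ x in ball y (2 * ε), |g x - z| := by
  have habs : ∀ x, |mollK ρ ε (y - x) * (g x - z)| = mollK ρ ε (y - x) * |g x - z| :=
    fun x => by rw [abs_mul, abs_of_nonneg (hρ.mollK_nonneg hε _)]
  have hint : Integrable fun x => mollK ρ ε (y - x) * |g x - z| :=
    ((hρ.integrable_mollK_sub_mul hε (hg.sub (locallyIntegrable_const z)) y).abs).congr
      (ae_of_all _ habs)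
  have hint' : IntegrableOn (fun x => |g x - z|) (ball y (2 * ε)) :=
    IntegrableOn.mono_set (((hg.sub (locallyIntegrable_const z)).integrableOn_isCompact
      (isCompact_closedBall y (2 * ε))).abs) ball_subset_closedBall
  have hsupp : ∀ x ∉ ball y (2 * ε), mollK ρ ε (y - x) * |g x - z| = 0 := fun x hx => by
    rw [hρ.mollK_sub_eq_zero hε (by rw [mem_ball, not_lt] at hx; linarith), zero_mul]
  calc |mollify ρ ε g y - z| = |∫ x, mollK ρ ε (y - x) * (g x - z)| := by
        simp_rw [mul_sub, mollify]
        rw [integral_sub (hρ.integrable_mollK_sub_mul hε hg y)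
          (((hρ.integrable_mollK hε).comp_sub_left y).mul_const z),
          integral_mul_const, hρ.integral_mollK_sub hε, one_mul]
    _ ≤ ∫ x, mollK ρ ε (y - x) * |g x - z| :=
        abs_integral_le_integral_abs.trans_eq (integral_congr_ae (ae_of_all _ habs))
    _ = ∫ x in ball y (2 * ε), mollK ρ ε (y - x) * |g x - z| :=
        (setIntegral_eq_integral_of_forall_compl_eq_zero hsupp).symm
    _ ≤ ∫ x in ball y (2 * ε), (ε ^ N)⁻¹ * C * |g x - z| :=
        setIntegral_mono_on hint.integrableOn (hint'.const_mul _) measurableSet_ball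
          fun x _ => mul_le_mul_of_nonneg_right (hC _) (abs_nonneg _)
    _ = (ε ^ N)⁻¹ * C * ∫ x in ball y (2 * ε), |g x - z| := integral_const_mul _ _

end IsMollifier

theorem measurable_setIntegral_Ioc {α : Type*} [MeasurableSpace α] {h : α → ℝ → ℝ}
    (hh : Measurable (uncurry h)) {a b : α → ℝ} (ha : Measurable a) (hb : Measurable b) :
    Measurable fun p => ∫ s in Ioc (a p) (b p), h p s := by
  set S : Set (α × ℝ) := {q | a q.1 < q.2} ∩ {q | q.2 ≤ b q.1}
  have hS : MeasurableSet S := (measurableSet_lt (ha.comp measurable_fst) measurable_snd).inter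
    (measurableSet_le measurable_snd (hb.comp measurable_fst))
  have hind : (fun p => ∫ s in Ioc (a p) (b p), h p s) =
      fun p => ∫ s, S.indicator (uncurry h) (p, s) := by
    ext p
    rw [← integral_indicator measurableSet_Ioc]
    rfl
  rw [hind]
  exact ((hh.indicator hS).stronglyMeasurable.integral_prod_right').measurable

section Ffun

variable {N : ℕ} {f : Euc N → ℝ → ℝ}

theorem measurable_uncurry_Ffun (hf : Measurable (uncurry f)) :
    Measurable (uncurry (Ffun f)) := by
  have hf' : Measurable (uncurry fun (p : Euc N × ℝ) s => f p.1 s) :=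
    hf.comp (measurable_fst.fst.prodMk measurable_snd)
  exact (measurable_setIntegral_Ioc hf' measurable_const measurable_snd).sub
    (measurable_setIntegral_Ioc hf' measurable_snd measurable_const)

theorem abs_Ffun_le {y : Euc N} (h1 : ∀ᵐ s, |f y s| ≤ 1) (t : ℝ) : |Ffun f y t| ≤ |t| := by
  simpa [Ffun] using intervalIntegral.norm_integral_le_of_norm_le_const_ae (a := 0) (b := t)
    (f := f y) (h1.mono fun s hs _ => hs)

theorem abs_Ffun_sub_le {y : Euc N} (hfy : AEStronglyMeasurable (f y))
    (h1 : ∀ᵐ s, |f y s| ≤ 1) (t t' : ℝ) : |Ffun f y t - Ffun f y t'| ≤ |t - t'| := by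
  have hint : ∀ a b, IntervalIntegrable (f y) volume a b := fun a b =>
    (intervalIntegrable_const (c := (1 : ℝ))).mono_fun hfy.restrict
      (ae_restrict_of_ae (h1.mono fun s hs => by simpa using hs))
  rw [Ffun, Ffun, intervalIntegral.integral_interval_sub_left (hint 0 t) (hint 0 t')]
  simpa using intervalIntegral.norm_integral_le_of_norm_le_const_ae (a := t') (b := t)
    (f := f y) (h1.mono fun s hs _ => hs)

theorem abs_mul_Ffun_le {y x : Euc N} {φ u : Euc N → ℝ} {Cφ Cu : ℝ}
    (h1 : ∀ᵐ s, |f y s| ≤ 1) (hφ : ∀ x, ‖φ x‖ ≤ Cφ) (hCu : 0 ≤ Cu)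
    (hu : x ∈ tsupport φ → |u x| ≤ Cu) : |φ x * Ffun f y (u x)| ≤ Cφ * Cu := by
  by_cases hx : x ∈ tsupport φ
  · rw [abs_mul]
    exact mul_le_mul (hφ x) ((abs_Ffun_le h1 _).trans (hu hx)) (abs_nonneg _)
      ((norm_nonneg _).trans (hφ x))
  · rw [image_eq_zero_of_notMem_tsupport hx, zero_mul, abs_zero]
    exact mul_nonneg ((norm_nonneg _).trans (hφ x)) hCu

end Ffun

theorem DivAssumptions.ae_ae_abs_le_one {N : ℕ} {Ω : Set (Euc N)} {b : Euc N → ℝ → Euc N}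
    {σ : Measure (Euc N)} [SFinite σ] {f : Euc N → ℝ → ℝ} (H : DivAssumptions Ω b σ f) :
    ∀ᵐ x ∂σ, ∀ᵐ s, |f x s| ≤ 1 :=
  (Measure.ae_ae_comm (p := fun x s => |f x s| ≤ 1)
    (measurableSet_le H.meas_f.abs measurable_const)).2
    (ae_of_all _ H.bound_f)

theorem DivAssumptions.isLocallyFiniteMeasure {N : ℕ} {b : Euc N → ℝ → Euc N}
    {σ : Measure (Euc N)} {f : Euc N → ℝ → ℝ} (H : DivAssumptions univ b σ f) :
    IsLocallyFiniteMeasure σ :=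
  ⟨fun x => ⟨closedBall x 1, closedBall_mem_nhds x one_pos,
    H.locFin_σ _ (subset_univ _) (isCompact_closedBall x 1)⟩⟩

theorem LocBddOn.exists_ae_abs_le {N : ℕ} {u : Euc N → ℝ} (hu : LocBddOn univ u)
    {K : Set (Euc N)} (hK : IsCompact K) : ∃ C, 0 ≤ C ∧ ∀ᵐ x, x ∈ K → |u x| ≤ C := by
  obtain ⟨C, hC⟩ := hu K (subset_univ _) hK
  exact ⟨max C 0, le_max_right _ _, (ae_restrict_iff' hK.measurableSet).1
    (hC.mono fun _ hx => hx.trans (le_max_left _ _))⟩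

theorem ContinuousAt.approxLimitAt {N : ℕ} {φ : Euc N → ℝ} {y : Euc N}
    (hφ : ContinuousAt φ y) : ApproxLimitAt φ y (φ y) := by
  rw [ApproxLimitAt, Metric.tendsto_nhds]
  intro η hη
  obtain ⟨δ, hδ, hφδ⟩ := Metric.continuousAt_iff.1 hφ (η / 2) (half_pos hη)
  filter_upwards [Ioo_mem_nhdsGT hδ] with r hr
  have hvol : 0 < volume.real (ball y r) :=
    ENNReal.toReal_pos (measure_ball_pos _ _ hr.1).ne' measure_ball_lt_top.ne
  have hint : ‖∫ x in ball y r, |φ x - φ y|‖ ≤ η / 2 * volume.real (ball y r) :=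
    norm_setIntegral_le_of_norm_le_const measure_ball_lt_top fun x hx => by
      simpa [← Real.dist_eq] using (hφδ (hx.trans hr.2)).le
  rw [Real.dist_eq, sub_zero, ← measureReal_def, abs_mul, abs_inv, abs_of_pos hvol,
    inv_mul_lt_iff₀ hvol]
  rw [Real.norm_eq_abs] at hint
  nlinarith

namespace ApproxLimitAt

variable {N : ℕ}

theorem tendsto_mollify {ρ : Euc N → ℝ} (hρ : IsMollifier ρ) {g : Euc N → ℝ}
    (hg : LocallyIntegrable g) {y : Euc N} {z : ℝ} (h : ApproxLimitAt g y z) :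
    Tendsto (fun ε => mollify ρ ε g y) (𝓝[>] 0) (𝓝 z) := by
  obtain ⟨C, hC⟩ := hρ.exists_mollK_le
  set v : ℝ := (volume (ball (0 : Euc N) 1)).toReal
  have hv : 0 < v := ENNReal.toReal_pos (measure_ball_pos _ _ one_pos).ne' measure_ball_lt_top.ne
  have hvol : ∀ r > 0, (volume (ball y r)).toReal = r ^ N * v := fun r hr => by
    rw [Measure.addHaar_ball_of_pos _ _ hr, ENNReal.toReal_mul,
      ENNReal.toReal_ofReal (by positivity), finrank_euclideanSpace_fin]
  have hdouble : Tendsto (fun ε : ℝ => 2 * ε) (𝓝[>] 0) (𝓝[>] 0) :=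
    tendsto_iff_comap.2 (comap_mulLeft_nhdsGT_zero two_pos).ge
  have hlim := (h.comp hdouble).const_mul (C * 2 ^ N * v)
  rw [mul_zero] at hlim
  rw [tendsto_iff_norm_sub_tendsto_zero]
  refine squeeze_zero' (Eventually.of_forall fun _ => norm_nonneg _) ?_ hlim
  filter_upwards [self_mem_nhdsWithin] with ε (hε : 0 < ε)
  calc ‖mollify ρ ε g y - z‖ ≤ (ε ^ N)⁻¹ * C * ∫ x in ball y (2 * ε), |g x - z| :=
        hρ.abs_mollify_sub_le hε (hC ε hε) hg y z
    _ = C * 2 ^ N * v * ((volume (ball y (2 * ε))).toReal⁻¹ *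
          ∫ x in ball y (2 * ε), |g x - z|) := by
        rw [hvol _ (by positivity), mul_pow]
        field_simp

theorem of_abs_sub_le {v w g : Euc N → ℝ} {y : Euc N} {a b c : ℝ}
    (hv : LocallyIntegrable v) (hw : LocallyIntegrable w)
    (hva : ApproxLimitAt v y a) (hwb : ApproxLimitAt w y b) {C D : ℝ}
    (hle : ∀ᵐ x, |g x - c| ≤ C * |v x - a| + D * |w x - b|) : ApproxLimitAt g y c := by
  have hlim := (hva.const_mul C).add (hwb.const_mul D)
  rw [mul_zero, mul_zero, add_zero] at hlim
  refine squeeze_zero' ?_ ?_ hlim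
  · exact Eventually.of_forall fun r => mul_nonneg (inv_nonneg.2 ENNReal.toReal_nonneg)
      (integral_nonneg fun _ => abs_nonneg _)
  · filter_upwards [self_mem_nhdsWithin] with r (hr : 0 < r)
    have hint : ∀ {v : Euc N → ℝ} (a : ℝ), LocallyIntegrable v →
        IntegrableOn (fun x => |v x - a|) (ball y r) := fun a hv =>
      IntegrableOn.mono_set (((hv.sub (locallyIntegrable_const a)).integrableOn_isCompact
        (isCompact_closedBall y r)).abs) ball_subset_closedBall
    have hmono : ∫ x in ball y r, |g x - c| ≤
        C * (∫ x in ball y r, |v x - a|) + D * ∫ x in ball y r, |w x - b| := by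
      rw [← integral_const_mul, ← integral_const_mul,
        ← integral_add ((hint a hv).const_mul C) ((hint b hw).const_mul D)]
      exact integral_mono_of_nonneg (Eventually.of_forall fun _ => abs_nonneg _)
        (((hint a hv).const_mul C).add ((hint b hw).const_mul D)) (ae_restrict_of_ae hle)
    calc _ ≤ (volume (ball y r)).toReal⁻¹ *
          (C * (∫ x in ball y r, |v x - a|) + D * ∫ x in ball y r, |w x - b|) :=
          mul_le_mul_of_nonneg_left hmono (inv_nonneg.2 ENNReal.toReal_nonneg)
      _ = _ := by ring

theorem tendsto_mollify_mul_Ffun {ρ : Euc N → ℝ} (hρ : IsMollifier ρ)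
    {f : Euc N → ℝ → ℝ} {u φ : Euc N → ℝ} {y : Euc N} {z : ℝ}
    (hu : LocallyIntegrable u) (huz : ApproxLimitAt u y z)
    (hφ : Continuous φ) (hφs : HasCompactSupport φ)
    (hfy : AEStronglyMeasurable (f y)) (h1 : ∀ᵐ s, |f y s| ≤ 1) :
    Tendsto (fun ε => mollify ρ ε (fun x => φ x * Ffun f y (u x)) y) (𝓝[>] 0)
      (𝓝 (φ y * Ffun f y z)) := by
  obtain ⟨C, hC⟩ := hφ.bounded_above_of_compact_support hφs
  have hFu : LocallyIntegrable fun x => Ffun f y (u x) := by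
    have hF : Continuous (Ffun f y) := (LipschitzWith.mk_one fun a b => by
      simpa only [Real.dist_eq] using abs_Ffun_sub_le hfy h1 a b).continuous
    exact hu.mono
      (hF.measurable.comp_aemeasurable hu.aestronglyMeasurable.aemeasurable).aestronglyMeasurable
      (ae_of_all _ fun x => abs_Ffun_le h1 (u x))
  refine tendsto_mollify hρ
    (hFu.integrable_smul_left_of_hasCompactSupport hφ hφs).locallyIntegrable ?_
  refine huz.of_abs_sub_le hu hφ.locallyIntegrable hφ.continuousAt.approxLimitAt
    (C := C) (D := |Ffun f y z|) (ae_of_all _ fun x => ?_)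
  calc |φ x * Ffun f y (u x) - φ y * Ffun f y z|
      = |φ x * (Ffun f y (u x) - Ffun f y z) + Ffun f y z * (φ x - φ y)| := by ring_nf
    _ ≤ |φ x| * |Ffun f y (u x) - Ffun f y z| + |Ffun f y z| * |φ x - φ y| :=
        (abs_add_le _ _).trans_eq (by rw [abs_mul, abs_mul])
    _ ≤ C * |u x - z| + |Ffun f y z| * |φ x - φ y| := by
        have hCx : |φ x| ≤ C := hC x
        exact add_le_add_left (mul_le_mul hCx (abs_Ffun_sub_le hfy h1 _ _) (abs_nonneg _)
          ((abs_nonneg _).trans hCx)) _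

end ApproxLimitAt

namespace IsMollifier

variable {N : ℕ} {ρ : Euc N → ℝ} (hρ : IsMollifier ρ) {σ : Measure (Euc N)}
  [IsLocallyFiniteMeasure σ] {G : Euc N → Euc N → ℝ} {K : Set (Euc N)} {C : ℝ}
include hρ

theorem integrable_mollK_mul_prod {ε : ℝ} (hε : 0 < ε)
    (hG : AEStronglyMeasurable (fun p : Euc N × Euc N => G p.2 p.1) (volume.prod σ))
    (hK : IsCompact K) (hGK : ∀ y, ∀ x ∉ K, G y x = 0)
    (hGC : ∀ᵐ p ∂(volume.prod σ), |G p.2 p.1| ≤ C) :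
    Integrable (fun p : Euc N × Euc N => mollK ρ ε (p.1 - p.2) * G p.2 p.1)
      (volume.prod σ) := by
  obtain ⟨Cρ, hCρ⟩ := hρ.exists_mollK_le
  have hKε : IsCompact (cthickening ε K) := hK.cthickening
  refine Integrable.mono' (g := (K ×ˢ cthickening ε K).indicator fun _ => (ε ^ N)⁻¹ * Cρ * C)
    ((integrableOn_const ?_).integrable_indicator (hK.measurableSet.prod hKε.measurableSet))
    (((hρ.continuous_mollK ε).comp continuous_sub).aestronglyMeasurable.mul hG) ?_
  · rw [Measure.prod_prod]
    exact ENNReal.mul_ne_top hK.measure_lt_top.ne hKε.measure_lt_top.ne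
  filter_upwards [hGC] with p hp
  rw [norm_mul, Real.norm_of_nonneg (hρ.mollK_nonneg hε _)]
  by_cases hx : p.1 ∈ K
  · by_cases hy : p.2 ∈ cthickening ε K
    · rw [indicator_of_mem (mk_mem_prod hx hy)]
      exact mul_le_mul (hCρ ε hε _) hp (abs_nonneg _)
        ((hρ.mollK_nonneg hε _).trans (hCρ ε hε (p.1 - p.2)))
    · have hxy : ε < dist p.2 p.1 :=
        not_le.1 fun h => hy (mem_cthickening_of_dist_le _ _ _ _ hx h)
      simp [hρ.mollK_sub_eq_zero hε hxy, indicator_of_notMem (fun h => hy (mem_prod.1 h).2)]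
  · simp [hGK _ _ hx, indicator_of_notMem (fun h => hx (mem_prod.1 h).1)]

theorem tendsto_integral_mollify {L : Euc N → ℝ} (hK : IsCompact K)
    (hGK : ∀ y, ∀ x ∉ K, G y x = 0) (hGC : ∀ᵐ y ∂σ, ∀ᵐ x, |G y x| ≤ C)
    (hmeas : ∀ ε > 0, AEStronglyMeasurable (fun y => mollify ρ ε (G y) y) σ)
    (hlim : ∀ᵐ y ∂σ, Tendsto (fun ε => mollify ρ ε (G y) y) (𝓝[>] 0) (𝓝 (L y))) :
    Tendsto (fun ε => ∫ y, mollify ρ ε (G y) y ∂σ) (𝓝[>] 0) (𝓝 (∫ y, L y ∂σ)) := by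
  have hK₁ : IsCompact (cthickening 1 K) := hK.cthickening
  refine tendsto_integral_filter_of_dominated_convergence
    ((cthickening 1 K).indicator fun _ => C) ?_ ?_
    ((integrableOn_const hK₁.measure_lt_top.ne).integrable_indicator hK₁.measurableSet) hlim
  · filter_upwards [self_mem_nhdsWithin] with ε hε using hmeas ε hε
  filter_upwards [Ioo_mem_nhdsGT one_pos] with ε hε
  filter_upwards [hGC] with y hy
  by_cases hy₁ : y ∈ cthickening 1 K
  · rw [indicator_of_mem hy₁]
    exact hρ.abs_mollify_le hε.1 hy y
  · rw [indicator_of_notMem hy₁, hρ.mollify_eq_zero hε.1 (hGK y)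
      (fun h => hy₁ (cthickening_mono hε.2.le K h)), norm_zero]

theorem tendsto_integral_integral_mollK_mul {L : Euc N → ℝ} {P Q : Euc N → Prop}
    (hG : AEStronglyMeasurable (fun p : Euc N × Euc N => G p.2 p.1) (volume.prod σ))
    (hK : IsCompact K) (hGK : ∀ y, ∀ x ∉ K, G y x = 0)
    (hP : ∀ᵐ y ∂σ, P y) (hQ : ∀ᵐ x, Q x) (hGC : ∀ y x, P y → Q x → |G y x| ≤ C)
    (hlim : ∀ᵐ y ∂σ, Tendsto (fun ε => mollify ρ ε (G y) y) (𝓝[>] 0) (𝓝 (L y))) :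
    Tendsto (fun ε => ∫ x, ∫ y, mollK ρ ε (x - y) * G y x ∂σ) (𝓝[>] 0)
      (𝓝 (∫ y, L y ∂σ)) := by
  have hGC₁ : ∀ᵐ p ∂(volume.prod σ), |G p.2 p.1| ≤ C := by
    filter_upwards [Measure.quasiMeasurePreserving_snd.ae hP,
      Measure.quasiMeasurePreserving_fst.ae hQ] with p hy hx using hGC _ _ hy hx
  have hGC₂ : ∀ᵐ y ∂σ, ∀ᵐ x, |G y x| ≤ C := by
    filter_upwards [hP] with y hy
    filter_upwards [hQ] with x hx using hGC y x hy hx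
  have hint := fun ε (hε : 0 < ε) => hρ.integrable_mollK_mul_prod hε hG hK hGK hGC₁
  have hdiag : ∀ ε, (fun y => mollify ρ ε (G y) y) =
      fun y => ∫ x, mollK ρ ε (x - y) * G y x := fun ε =>
    funext fun y => hρ.mollify_eq ε (G y) y
  refine (hρ.tendsto_integral_mollify hK hGK hGC₂ (fun ε hε => ?_) hlim).congr' ?_
  · rw [hdiag]
    exact (hint ε hε).integral_prod_right.aestronglyMeasurable
  · filter_upwards [self_mem_nhdsWithin] with ε hε
    rw [hdiag]
    exact (integral_integral_swap (hint ε hε)).symm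

end IsMollifier

theorem mollified_divergence_convergence_general {N : ℕ}
    (b : Euc N → ℝ → Euc N)
    (σ : Measure (Euc N)) (f : Euc N → ℝ → ℝ)
    (H : DivAssumptions univ b σ f)
    (u : Euc N → ℝ) (ut : Euc N → ℝ)
    (hu : LocallyIntegrableOn u univ)
    (hub : LocBddOn univ u)
    (hut : ∀ᵐ x ∂σ, ApproxLimitAt u x (ut x))
    (ρ : Euc N → ℝ) (hρ : IsMollifier ρ)
    (φ : Euc N → ℝ) (hφ : TestFun univ φ) :
    Tendsto (fun ε : ℝ =>
        ∫ x, φ x * ∫ y, mollK ρ ε (x - y) * Ffun f y (u x) ∂σ)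
      (𝓝[>] (0:ℝ)) (𝓝 (∫ x, φ x * Ffun f x (ut x) ∂σ)) := by
  have := H.isLocallyFiniteMeasure
  obtain ⟨hφc, hK, -⟩ := hφ
  have hu' : LocallyIntegrable u := locallyIntegrableOn_univ.mp hu
  obtain ⟨Cφ, hCφ⟩ := hφc.continuous.bounded_above_of_compact_support hK
  obtain ⟨Cu, hCu0, hCu⟩ := hub.exists_ae_abs_le hK
  have hf1 := H.ae_ae_abs_le_one
  set G : Euc N → Euc N → ℝ := fun y x => φ x * Ffun f y (u x)
  have hG : AEStronglyMeasurable (fun p : Euc N × Euc N => G p.2 p.1) (volume.prod σ) :=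
    (hφc.continuous.comp continuous_fst).aestronglyMeasurable.mul
      ((measurable_uncurry_Ffun H.meas_f).comp_aemeasurable (measurable_snd.aemeasurable.prodMk
        (hu'.aestronglyMeasurable.aemeasurable.comp_quasiMeasurePreserving
          Measure.quasiMeasurePreserving_fst))).aestronglyMeasurable
  have hlim : ∀ᵐ y ∂σ, Tendsto (fun ε => mollify ρ ε (G y) y) (𝓝[>] 0)
      (𝓝 (φ y * Ffun f y (ut y))) := by
    filter_upwards [hut, hf1] with y hy hy1
    exact hy.tendsto_mollify_mul_Ffun hρ hu' hφc.continuous hK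
      (H.meas_f.comp measurable_prodMk_left).aestronglyMeasurable hy1
  convert hρ.tendsto_integral_integral_mollK_mul hG hK
    (fun y x hx => by simp [G, image_eq_zero_of_notMem_tsupport hx]) hf1 hCu
    (fun y x hy hx => abs_mul_Ffun_le hy hCφ hCu0 hx) hlim using 3 with ε
  simp_rw [← integral_const_mul, G, mul_left_comm]

/-- convergence step `(f:ie)` in the proof of Theorem
`chainb3`: with `Div_x B_ε(·,t) = ρ_ε * (F(·,t)σ)`, `u ∈ W^{1,1}_loc ∩ L^∞_loc`
and `φ ∈ C_c^∞(ℝ^N)`,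
`∫ φ(x) Div_x B_ε(x,u(x)) dx → ∫ φ(x) F(x, ũ(x)) dσ(x)` as `ε → 0⁺`. -/
theorem mollified_divergence_convergence {N : ℕ}
    (b : Euc N → ℝ → Euc N)
    (σ : Measure (Euc N)) (f : Euc N → ℝ → ℝ) (M : ℝ)
    (H : DivAssumptions univ b σ f) (hM : ∀ x t, ‖b x t‖ ≤ M)
    (u : Euc N → ℝ) (gradu : Euc N → Euc N) (ut : Euc N → ℝ)
    (hu : LocallyIntegrableOn u univ) (hgrad : LocallyIntegrableOn gradu univ)
    (hub : LocBddOn univ u)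
    (hW11 : ∀ φ : Euc N → ℝ, TestFun univ φ →
      (∫ x, u x • gradient φ x) = -∫ x, φ x • gradu x)
    (hut : ∀ᵐ x ∂σ, ApproxLimitAt u x (ut x))
    (ρ : Euc N → ℝ) (hρ : IsMollifier ρ)
    (φ : Euc N → ℝ) (hφ : TestFun univ φ) :
    Tendsto (fun ε : ℝ =>
        ∫ x, φ x * ∫ y, mollK ρ ε (x - y) * Ffun f y (u x) ∂σ)
      (𝓝[>] (0:ℝ)) (𝓝 (∫ x, φ x * Ffun f x (ut x) ∂σ)) :=
  mollified_divergence_convergence_general b σ f H u ut hu hub hut ρ hρ φ hφ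
end
end
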